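/- Let t be a positive integer, (Ω, 𝔽, ℙ) a probability space, and S : Ω → Matrix (Fin t) (Fin t) ℝ a measurable random matrix that is almost surely symmetric positive semidefinite with E[‖S‖] < ∞. For a real upper-triangular t × t matrix T (T_{ij} = 0 for i > j) with T_{ii} ≥ 0 for all i and ∑_{i ≤ j} T_{ij}² = 1, define Ψ(T) = E[log det(I_t + S Tᵀ T)]. For i ≤ j let E^{(ij)} be the t × t matrix with entries (E^{(ij)})_{mn} = T_{in} δ_{mj} + T_{im} δ_{nj} (i.e., E^{(ij)} = ∂(TᵀT)/∂T_{ij}). If T maximizes Ψ over all real upper-triangular matrices with nonnegative diagonal and ∑_{i ≤ j} T_{ij}² = 1, then there exists μ ≥ 0 such that: for all i < j, E[tr((I_t + S TᵀT)^{-1} S E^{(ij)})] = 2 μ T_{ij}; for all i with T_{ii} > 0, E[tr((I_t + S TᵀT)^{-1} S E^{(ii)})] = 2 μ T_{ii}; and for all i with T_{ii} = 0, E[tr((I_t + S TᵀT)^{-1} S E^{(ii)})] ≤ 0. -/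

import Mathlib

/-!
Factor `S = Cᴴ C`. The push-through identity `(1 + S Q)⁻¹ S = Cᴴ (1 + C Q Cᴴ)⁻¹ C` turns every
quantity into one about the positive definite matrix `1 + C Q Cᴴ`. With
`log det X - log det Y ≤ tr (Y⁻¹ X) - n` this shows that `Q ↦ log det (1 + S Q)` is concave on
positive semidefinite matrices with supergradient `(1 + S Q)⁻¹ S`, and it gives the bound
`|tr ((1 + S Q)⁻¹ S M)| ≤ tr S · ∑ |M i j|`, which is integrable.

For an upper-triangular direction `D` that keeps the diagonal nonnegative, the normalized curve
`T_s = (T + s D) / ‖T + s D‖` is feasible for small `s > 0`, so `Ψ (T_s) ≤ Ψ T`. Concavity at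
`Q_s = T_sᵀ T_s` bounds `E[tr ((1 + S Q_s)⁻¹ S (Q_s - Q) / s)]` by `(Ψ (T_s) - Ψ T) / s ≤ 0`, and
dominated convergence lets `s → 0⁺`: with `μ = E[tr ((1 + S Q)⁻¹ S Q)] ≥ 0`,
`E[tr ((1 + S Q)⁻¹ S (Dᵀ T + Tᵀ D))] ≤ tr (Dᵀ T + Tᵀ D) · μ`.
The directions `D = ± single i j 1` give the Kuhn–Tucker conditions, since then
`Dᵀ T + Tᵀ D = ± E^{(ij)}` and `tr E^{(ij)} = 2 T_{ij}`.
-/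

open MeasureTheory Matrix

/-- Matrices inherit the product measurable structure. -/
instance matrixMeasurableSpace {m n α : Type*} [MeasurableSpace α] :
    MeasurableSpace (Matrix m n α) :=
  inferInstanceAs (MeasurableSpace (m → n → α))

attribute [local instance] Matrix.frobeniusSeminormedAddCommGroup

/-- A feasible Cholesky factor: real upper-triangular, nonnegative diagonal,
with `∑_{i ≤ j} T_{ij}² = 1`. -/
def CholeskyFeasible {t : ℕ} (T : Matrix (Fin t) (Fin t) ℝ) : Prop :=
  (∀ i j : Fin t, j < i → T i j = 0) ∧ (∀ i : Fin t, 0 ≤ T i i) ∧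
    ∑ p ∈ Finset.univ.filter (fun p : Fin t × Fin t => p.1 ≤ p.2), (T p.1 p.2) ^ 2 = 1

open Filter Topology

namespace Matrix

variable {n : Type*} [Fintype n]

lemma posSemidef_transpose_mul_self {m : Type*} [Fintype m] (A : Matrix m n ℝ) :
    (Aᵀ * A).PosSemidef := by
  simpa using posSemidef_conjTranspose_mul_self A

lemma PosSemidef.two_mul_abs_apply_le {A : Matrix n n ℝ} (hA : A.PosSemidef) (i j : n) :
    2 * |A i j| ≤ A i i + A j j := by
  classical
  have hsymm : A j i = A i j := by simpa using congrFun (congrFun hA.1 i) j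
  have hquad (c : ℝ) : 0 ≤ A i i + 2 * c * A i j + c ^ 2 * A j j := by
    have := hA.dotProduct_mulVec_nonneg (Pi.single i 1 + c • Pi.single j 1)
    simp [mulVec_add, mulVec_smul, add_dotProduct, dotProduct_add, smul_dotProduct,
      dotProduct_smul, mulVec_single, single_dotProduct, hsymm] at this
    linarith
  rcases abs_cases (A i j) with ⟨h, -⟩ | ⟨h, -⟩ <;> rw [h] <;> nlinarith [hquad 1, hquad (-1)]

lemma PosSemidef.apply_le_trace {A : Matrix n n ℝ} (hA : A.PosSemidef) (i : n) :
    A i i ≤ A.trace :=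
  Finset.single_le_sum (f := fun i => A i i) (fun _ _ => hA.diag_nonneg) (Finset.mem_univ i)

lemma PosSemidef.abs_apply_le_trace {A : Matrix n n ℝ} (hA : A.PosSemidef) (i j : n) :
    |A i j| ≤ A.trace := by
  linarith [hA.two_mul_abs_apply_le i j, hA.apply_le_trace i, hA.apply_le_trace j]

lemma PosSemidef.abs_trace_mul_le {P : Matrix n n ℝ} (hP : P.PosSemidef) (M : Matrix n n ℝ) :
    |(P * M).trace| ≤ P.trace * ∑ i, ∑ j, |M i j| := by
  calc |(P * M).trace| = |∑ i, ∑ k, P i k * M k i| := by simp [trace, mul_apply]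
    _ ≤ ∑ i, ∑ k, |P i k| * |M k i| := by
      refine (Finset.abs_sum_le_sum_abs (fun i => ∑ k, P i k * M k i) _).trans
        (Finset.sum_le_sum fun i _ => ?_)
      simpa only [abs_mul] using Finset.abs_sum_le_sum_abs (fun k => P i k * M k i) _
    _ ≤ ∑ i, ∑ k, P.trace * |M k i| :=
      Finset.sum_le_sum fun i _ => Finset.sum_le_sum fun k _ =>
        mul_le_mul_of_nonneg_right (hP.abs_apply_le_trace i k) (abs_nonneg _)
    _ = P.trace * ∑ i, ∑ j, |M i j| := by
      rw [Finset.sum_comm]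
      simp only [Finset.mul_sum]

lemma abs_apply_le_frobenius_norm {m : Type*} [Fintype m] (A : Matrix m n ℝ) (i : m) (j : n) :
    |A i j| ≤ ‖A‖ :=
  (PiLp.norm_apply_le (WithLp.toLp 2 (A i)) j).trans
    (PiLp.norm_apply_le (WithLp.toLp 2 fun i => WithLp.toLp 2 (A i)) i)

lemma inv_one_add_mul_mul_eq_mul_inv_one_add_mul {R : Type*} [CommRing R] [DecidableEq n]
    {m : Type*} [Fintype m] [DecidableEq m] (A : Matrix n m R) (B : Matrix m n R)
    (h : IsUnit (1 + B * A).det) :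
    (1 + A * B)⁻¹ * A = A * (1 + B * A)⁻¹ := by
  have h' : IsUnit (1 + A * B).det := by rwa [det_one_add_mul_comm]
  have hcomm : (1 + A * B) * A = A * (1 + B * A) := by
    rw [Matrix.add_mul, Matrix.mul_add, Matrix.one_mul, Matrix.mul_one, Matrix.mul_assoc]
  calc (1 + A * B)⁻¹ * A = (1 + A * B)⁻¹ * (A * (1 + B * A) * (1 + B * A)⁻¹) := by
        rw [mul_nonsing_inv_cancel_right _ _ h]
    _ = A * (1 + B * A)⁻¹ := by
        rw [← hcomm, Matrix.mul_assoc, nonsing_inv_mul_cancel_left _ _ h']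

variable [DecidableEq n]

lemma PosDef.log_det_le_trace_sub_card {W : Matrix n n ℝ} (hW : W.PosDef) :
    Real.log W.det ≤ W.trace - Fintype.card n := by
  have hpos := hW.eigenvalues_pos
  rw [hW.1.det_eq_prod_eigenvalues, hW.1.trace_eq_sum_eigenvalues]
  simp only [RCLike.ofReal_real_eq_id, id_eq]
  rw [Real.log_prod fun i _ => (hpos i).ne']
  calc ∑ i, Real.log (hW.1.eigenvalues i) ≤ ∑ i, (hW.1.eigenvalues i - 1) :=
        Finset.sum_le_sum fun i _ => Real.log_le_sub_one_of_pos (hpos i)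
    _ = _ := by simp [Finset.sum_sub_distrib]

open scoped MatrixOrder in
/-- Apply `log det ≤ tr - n` to `D X D` with `D = √(Y⁻¹)`. -/
lemma PosDef.log_det_sub_log_det_le {X Y : Matrix n n ℝ} (hX : X.PosDef) (hY : Y.PosDef) :
    Real.log X.det - Real.log Y.det ≤ (Y⁻¹ * X).trace - Fintype.card n := by
  set D := CFC.sqrt Y⁻¹
  have hDD : D * D = Y⁻¹ := CFC.sqrt_mul_sqrt_self _ (nonneg_iff_posSemidef.2 hY.inv.posSemidef)
  have hDh : Dᴴ = D := (nonneg_iff_posSemidef.1 (CFC.sqrt_nonneg Y⁻¹)).1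
  have hD : IsUnit D := by
    rw [isUnit_iff_isUnit_det, isUnit_iff_ne_zero]
    intro h
    have := congrArg det hDD
    rw [det_mul, h, zero_mul] at this
    exact hY.inv.det_pos.ne' this.symm
  have hZ : (Dᴴ * X * D).PosDef :=
    hX.conjTranspose_mul_mul_same (mulVec_injective_iff_isUnit.2 hD)
  have hdet : (Dᴴ * X * D).det = X.det * (Y.det)⁻¹ := by
    rw [hDh, det_mul, det_mul, mul_right_comm, ← det_mul, hDD, det_nonsing_inv,
      Ring.inverse_eq_inv', mul_comm]
  have htr : (Dᴴ * X * D).trace = (Y⁻¹ * X).trace := by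
    rw [hDh, trace_mul_cycle, hDD]
  have := hZ.log_det_le_trace_sub_card
  rw [hdet, htr, Real.log_mul hX.det_pos.ne' (inv_ne_zero hY.det_pos.ne'), Real.log_inv] at this
  linarith

lemma PosSemidef.one_sub_inv_one_add {R : Matrix n n ℝ} (hR : R.PosSemidef) :
    (1 - (1 + R)⁻¹).PosSemidef := by
  have hB : (1 + R).PosDef := PosDef.one.add_posSemidef hR
  refine .of_dotProduct_mulVec_nonneg (isHermitian_one.sub hB.inv.1) fun x => ?_
  have hunit : IsUnit (1 + R).det := hB.det_pos.ne'.isUnit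
  obtain ⟨z, rfl⟩ : ∃ z, x = (1 + R) *ᵥ z :=
    ⟨(1 + R)⁻¹ *ᵥ x, by rw [mulVec_mulVec, mul_nonsing_inv _ hunit, one_mulVec]⟩
  have hxz : (1 - (1 + R)⁻¹) *ᵥ ((1 + R) *ᵥ z) = R *ᵥ z := by
    rw [mulVec_mulVec, sub_mul, one_mul, nonsing_inv_mul _ hunit, add_sub_cancel_left]
  rw [star_trivial, hxz, add_mulVec, one_mulVec, add_dotProduct]
  exact add_nonneg (hR.dotProduct_mulVec_nonneg z |>.trans_eq (by simp))
    (by simpa using dotProduct_self_star_nonneg (R *ᵥ z))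

open scoped MatrixOrder in
lemma PosSemidef.exists_eq_conjTranspose_mul_self {S : Matrix n n ℝ} (hS : S.PosSemidef) :
    ∃ C : Matrix n n ℝ, S = Cᴴ * C := by
  have hC := nonneg_iff_posSemidef.1 (CFC.sqrt_nonneg S)
  exact ⟨CFC.sqrt S, by rw [hC.1, CFC.sqrt_mul_sqrt_self S (nonneg_iff_posSemidef.2 hS)]⟩

section OneAddMul

variable {Q : Matrix n n ℝ}

lemma det_one_add_conjTranspose_mul_self_mul (C Q : Matrix n n ℝ) :
    (1 + Cᴴ * C * Q).det = (1 + C * Q * Cᴴ).det := by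
  rw [Matrix.mul_assoc, det_one_add_mul_comm]

lemma inv_one_add_conjTranspose_mul_self_mul_mul (hQ : Q.PosSemidef) (C : Matrix n n ℝ) :
    (1 + Cᴴ * C * Q)⁻¹ * (Cᴴ * C) = Cᴴ * (1 + C * Q * Cᴴ)⁻¹ * C := by
  have hY : (1 + C * Q * Cᴴ).PosDef :=
    PosDef.one.add_posSemidef (hQ.mul_mul_conjTranspose_same C)
  rw [Matrix.mul_assoc Cᴴ C Q, ← Matrix.mul_assoc, inv_one_add_mul_mul_eq_mul_inv_one_add_mul _ _
    (by simpa [Matrix.mul_assoc] using hY.det_pos.ne'.isUnit)]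

lemma trace_inv_one_add_conjTranspose_mul_self_mul_mul (hQ : Q.PosSemidef) (C M : Matrix n n ℝ) :
    ((1 + Cᴴ * C * Q)⁻¹ * (Cᴴ * C) * M).trace = ((1 + C * Q * Cᴴ)⁻¹ * (C * M * Cᴴ)).trace := by
  rw [inv_one_add_conjTranspose_mul_self_mul_mul hQ, Matrix.mul_assoc, Matrix.mul_assoc,
    trace_mul_comm]
  simp only [Matrix.mul_assoc]

variable {S : Matrix n n ℝ}

lemma det_one_add_mul_pos (hS : S.PosSemidef) (hQ : Q.PosSemidef) : 0 < (1 + S * Q).det := by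
  obtain ⟨C, rfl⟩ := hS.exists_eq_conjTranspose_mul_self
  rw [det_one_add_conjTranspose_mul_self_mul]
  exact (PosDef.one.add_posSemidef (hQ.mul_mul_conjTranspose_same C)).det_pos

lemma trace_inv_one_add_mul_mul_sub_le {Q₁ Q₂ : Matrix n n ℝ} (hS : S.PosSemidef)
    (hQ₁ : Q₁.PosSemidef) (hQ₂ : Q₂.PosSemidef) :
    ((1 + S * Q₂)⁻¹ * S * (Q₂ - Q₁)).trace
      ≤ Real.log (1 + S * Q₂).det - Real.log (1 + S * Q₁).det := by
  obtain ⟨C, rfl⟩ := hS.exists_eq_conjTranspose_mul_self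
  have hX : (1 + C * Q₁ * Cᴴ).PosDef :=
    PosDef.one.add_posSemidef (hQ₁.mul_mul_conjTranspose_same C)
  have hY : (1 + C * Q₂ * Cᴴ).PosDef :=
    PosDef.one.add_posSemidef (hQ₂.mul_mul_conjTranspose_same C)
  have htr : ((1 + Cᴴ * C * Q₂)⁻¹ * (Cᴴ * C) * (Q₂ - Q₁)).trace
      = Fintype.card n - ((1 + C * Q₂ * Cᴴ)⁻¹ * (1 + C * Q₁ * Cᴴ)).trace := by
    have hdiff : C * (Q₂ - Q₁) * Cᴴ = (1 + C * Q₂ * Cᴴ) - (1 + C * Q₁ * Cᴴ) := by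
      rw [mul_sub, sub_mul]
      abel
    rw [trace_inv_one_add_conjTranspose_mul_self_mul_mul hQ₂, hdiff, mul_sub, trace_sub,
      nonsing_inv_mul _ hY.det_pos.ne'.isUnit, trace_one]
  rw [htr, det_one_add_conjTranspose_mul_self_mul, det_one_add_conjTranspose_mul_self_mul]
  linarith [hX.log_det_sub_log_det_le hY]

lemma trace_inv_one_add_mul_mul_nonneg (hS : S.PosSemidef) (hQ : Q.PosSemidef) :
    0 ≤ ((1 + S * Q)⁻¹ * S * Q).trace := by
  obtain ⟨C, rfl⟩ := hS.exists_eq_conjTranspose_mul_self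
  have hR := hQ.mul_mul_conjTranspose_same C
  have hY : IsUnit (1 + C * Q * Cᴴ).det := (PosDef.one.add_posSemidef hR).det_pos.ne'.isUnit
  have h : (1 + C * Q * Cᴴ)⁻¹ * (C * Q * Cᴴ) = 1 - (1 + C * Q * Cᴴ)⁻¹ := by
    rw [eq_sub_iff_add_eq, add_comm, ← _root_.mul_one_add, nonsing_inv_mul _ hY]
  rw [trace_inv_one_add_conjTranspose_mul_self_mul_mul hQ, h]
  exact hR.one_sub_inv_one_add.trace_nonneg

lemma posSemidef_inv_one_add_mul_mul (hS : S.PosSemidef) (hQ : Q.PosSemidef) :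
    ((1 + S * Q)⁻¹ * S).PosSemidef := by
  obtain ⟨C, rfl⟩ := hS.exists_eq_conjTranspose_mul_self
  rw [inv_one_add_conjTranspose_mul_self_mul_mul hQ]
  exact (PosDef.one.add_posSemidef (hQ.mul_mul_conjTranspose_same C)).inv.posSemidef
    |>.conjTranspose_mul_mul_same C

lemma trace_inv_one_add_mul_mul_le_trace (hS : S.PosSemidef) (hQ : Q.PosSemidef) :
    ((1 + S * Q)⁻¹ * S).trace ≤ S.trace := by
  obtain ⟨C, rfl⟩ := hS.exists_eq_conjTranspose_mul_self
  have h := ((hQ.mul_mul_conjTranspose_same C).one_sub_inv_one_add.conjTranspose_mul_mul_same C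
    ).trace_nonneg
  rw [Matrix.mul_sub, Matrix.sub_mul, Matrix.mul_one, trace_sub, sub_nonneg] at h
  rwa [inv_one_add_conjTranspose_mul_self_mul_mul hQ]

lemma abs_trace_inv_one_add_mul_mul_le (hS : S.PosSemidef) (hQ : Q.PosSemidef)
    (M : Matrix n n ℝ) :
    |((1 + S * Q)⁻¹ * S * M).trace| ≤ S.trace * ∑ i, ∑ j, |M i j| :=
  ((posSemidef_inv_one_add_mul_mul hS hQ).abs_trace_mul_le M).trans <|
    mul_le_mul_of_nonneg_right (trace_inv_one_add_mul_mul_le_trace hS hQ) <|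
      Finset.sum_nonneg fun _ _ => Finset.sum_nonneg fun _ _ => abs_nonneg _

lemma log_det_one_add_mul_nonneg (hS : S.PosSemidef) (hQ : Q.PosSemidef) :
    0 ≤ Real.log (1 + S * Q).det := by
  have := trace_inv_one_add_mul_mul_sub_le hS PosSemidef.zero hQ
  simp only [sub_zero, mul_zero, add_zero, det_one, Real.log_one] at this
  exact (trace_inv_one_add_mul_mul_nonneg hS hQ).trans this

lemma log_det_one_add_mul_le_trace (hS : S.PosSemidef) (hQ : Q.PosSemidef) :
    Real.log (1 + S * Q).det ≤ (S * Q).trace := by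
  simpa [trace_neg] using trace_inv_one_add_mul_mul_sub_le hS hQ PosSemidef.zero

end OneAddMul

lemma tendsto_trace_inv_one_add_mul_mul {ι : Type*} {l : Filter ι} {S Q₀ M₀ : Matrix n n ℝ}
    {Q M : ι → Matrix n n ℝ} (hdet : (1 + S * Q₀).det ≠ 0) (hQ : Tendsto Q l (𝓝 Q₀))
    (hM : Tendsto M l (𝓝 M₀)) :
    Tendsto (fun i => ((1 + S * Q i)⁻¹ * S * M i).trace) l
      (𝓝 ((1 + S * Q₀)⁻¹ * S * M₀).trace) := by
  have hinv : ContinuousAt Inv.inv (1 + S * Q₀) :=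
    continuousAt_matrix_inv _ (by rw [Ring.inverse_eq_inv']; exact continuousAt_inv₀ hdet)
  have := ((hinv.tendsto.comp (tendsto_const_nhds.add ((tendsto_const_nhds (x := S)).mul hQ))).mul
    (tendsto_const_nhds (x := S))).mul hM
  exact (continuous_id.matrix_trace.tendsto _).comp this

instance borelSpace {m : Type*} [Fintype m] : BorelSpace (Matrix m n ℝ) :=
  inferInstanceAs (BorelSpace (m → n → ℝ))

lemma measurable_trace_inv_one_add_mul_mul (Q M : Matrix n n ℝ) :
    Measurable fun X : Matrix n n ℝ => ((1 + X * Q)⁻¹ * X * M).trace := by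
  simp_rw [inv_def, Ring.inverse_eq_inv', Matrix.smul_mul, trace_smul, smul_eq_mul]
  have h : Continuous fun X : Matrix n n ℝ => 1 + X * Q :=
    continuous_const.add (continuous_id.mul continuous_const)
  exact h.matrix_det.measurable.inv.mul
    ((h.matrix_adjugate.mul continuous_id).mul continuous_const).matrix_trace.measurable

end Matrix

section Integral

variable {n : Type*} [Fintype n] {Ω : Type*} [MeasurableSpace Ω] {μ : Measure Ω}
  {S : Ω → Matrix n n ℝ}

lemma integrable_apply_of_integrable_norm (hS_meas : Measurable S)
    (hS : Integrable (fun ω => ‖S ω‖) μ) (i j : n) : Integrable (fun ω => S ω i j) μ :=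
  hS.mono' ((continuous_id.matrix_elem i j).measurable.comp hS_meas).aestronglyMeasurable
    (.of_forall fun ω => (Real.norm_eq_abs _).trans_le (abs_apply_le_frobenius_norm (S ω) i j))

lemma integrable_trace_mul (hS_int : ∀ i j, Integrable (fun ω => S ω i j) μ)
    (Q : Matrix n n ℝ) : Integrable (fun ω => (S ω * Q).trace) μ := by
  simp only [trace, diag, mul_apply]
  exact integrable_finsetSum _ fun i _ => integrable_finsetSum _ fun k _ =>
    (hS_int i k).mul_const _

variable [DecidableEq n]

lemma integrable_log_det_one_add_mul (hS_meas : Measurable S)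
    (hS_psd : ∀ᵐ ω ∂μ, (S ω).PosSemidef) (hS_int : ∀ i j, Integrable (fun ω => S ω i j) μ)
    {Q : Matrix n n ℝ} (hQ : Q.PosSemidef) :
    Integrable (fun ω => Real.log (1 + S ω * Q).det) μ := by
  have hdet : Continuous fun X : Matrix n n ℝ => (1 + X * Q).det :=
    (continuous_const.add (continuous_id.mul continuous_const)).matrix_det
  refine (integrable_trace_mul hS_int Q).mono'
    (Real.measurable_log.comp (hdet.measurable.comp hS_meas)).aestronglyMeasurable ?_
  filter_upwards [hS_psd] with ω hω
  rw [Real.norm_eq_abs, abs_of_nonneg (log_det_one_add_mul_nonneg hω hQ)]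
  exact log_det_one_add_mul_le_trace hω hQ

lemma integrable_trace_inv_one_add_mul_mul (hS_meas : Measurable S)
    (hS_psd : ∀ᵐ ω ∂μ, (S ω).PosSemidef) (hS_int : ∀ i j, Integrable (fun ω => S ω i j) μ)
    {Q : Matrix n n ℝ} (hQ : Q.PosSemidef) (M : Matrix n n ℝ) :
    Integrable (fun ω => ((1 + S ω * Q)⁻¹ * S ω * M).trace) μ := by
  refine ((integrable_trace_mul hS_int 1).mul_const (∑ i, ∑ j, |M i j|)).mono'
    ((measurable_trace_inv_one_add_mul_mul Q M).comp hS_meas).aestronglyMeasurable ?_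
  filter_upwards [hS_psd] with ω hω
  simpa using abs_trace_inv_one_add_mul_mul_le hω hQ M

lemma tendsto_integral_trace_inv_one_add_mul_mul {ι : Type*} {l : Filter ι}
    [l.IsCountablyGenerated] (hS_meas : Measurable S) (hS_psd : ∀ᵐ ω ∂μ, (S ω).PosSemidef)
    (hS_int : ∀ i j, Integrable (fun ω => S ω i j) μ) {Q M : ι → Matrix n n ℝ}
    {Q₀ M₀ : Matrix n n ℝ} (hQ : ∀ i, (Q i).PosSemidef) (hQ₀ : Q₀.PosSemidef)
    (hQlim : Tendsto Q l (𝓝 Q₀)) (hMlim : Tendsto M l (𝓝 M₀)) :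
    Tendsto (fun i => ∫ ω, ((1 + S ω * Q i)⁻¹ * S ω * M i).trace ∂μ) l
      (𝓝 (∫ ω, ((1 + S ω * Q₀)⁻¹ * S ω * M₀).trace ∂μ)) := by
  set K := ∑ a, ∑ b, |M₀ a b| + 1
  have hMbound : ∀ᶠ i in l, ∑ a, ∑ b, |M i a b| ≤ K := by
    have hc : Continuous fun M : Matrix n n ℝ => ∑ a, ∑ b, |M a b| := by fun_prop
    exact ((hc.tendsto M₀).comp hMlim).eventually (eventually_le_nhds (lt_add_one _))
  have htr : Integrable (fun ω => (S ω).trace) μ := by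
    simpa using integrable_trace_mul hS_int 1
  refine tendsto_integral_filter_of_dominated_convergence (fun ω => (S ω).trace * K)
    (.of_forall fun i => ((measurable_trace_inv_one_add_mul_mul _ _).comp
      hS_meas).aestronglyMeasurable) ?_ (htr.mul_const K) ?_
  · filter_upwards [hMbound] with i hi
    filter_upwards [hS_psd] with ω hω
    exact (abs_trace_inv_one_add_mul_mul_le hω (hQ i) (M i)).trans
      (mul_le_mul_of_nonneg_left hi hω.trace_nonneg)
  · filter_upwards [hS_psd] with ω hω
    exact tendsto_trace_inv_one_add_mul_mul (det_one_add_mul_pos hω hQ₀).ne' hQlim hMlim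

lemma integral_trace_inv_one_add_mul_mul_nonpos_of_tendsto_slope (hS_meas : Measurable S)
    (hS_psd : ∀ᵐ ω ∂μ, (S ω).PosSemidef) (hS_int : ∀ i j, Integrable (fun ω => S ω i j) μ)
    {Q : ℝ → Matrix n n ℝ} {Q₀ M : Matrix n n ℝ} (hQ : ∀ s, (Q s).PosSemidef)
    (hQ₀ : Q₀.PosSemidef) (hslope : Tendsto (fun s => s⁻¹ • (Q s - Q₀)) (𝓝[>] 0) (𝓝 M))
    (hle : ∀ᶠ s in 𝓝[>] 0,
      ∫ ω, Real.log (1 + S ω * Q s).det ∂μ ≤ ∫ ω, Real.log (1 + S ω * Q₀).det ∂μ) :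
    ∫ ω, ((1 + S ω * Q₀)⁻¹ * S ω * M).trace ∂μ ≤ 0 := by
  have hpos : ∀ᶠ s in 𝓝[>] (0 : ℝ), 0 < s := self_mem_nhdsWithin
  have hQlim : Tendsto Q (𝓝[>] 0) (𝓝 Q₀) := by
    have := tendsto_const_nhds (x := Q₀) |>.add <|
      (tendsto_nhdsWithin_of_tendsto_nhds tendsto_id).smul hslope
    rw [zero_smul, add_zero] at this
    refine this.congr' ?_
    filter_upwards [hpos] with s hs
    rw [id, smul_inv_smul₀ hs.ne', add_sub_cancel]
  refine le_of_tendsto (tendsto_integral_trace_inv_one_add_mul_mul hS_meas hS_psd hS_int hQ hQ₀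
    hQlim hslope) ?_
  filter_upwards [hle, hpos] with s hs hs0
  have hlog₀ := integrable_log_det_one_add_mul hS_meas hS_psd hS_int hQ₀
  have hlog := integrable_log_det_one_add_mul hS_meas hS_psd hS_int (hQ s)
  simp_rw [Matrix.mul_smul, trace_smul, smul_eq_mul]
  rw [integral_const_mul]
  refine mul_nonpos_of_nonneg_of_nonpos (inv_nonneg.2 hs0.le) ?_
  calc ∫ ω, ((1 + S ω * Q s)⁻¹ * S ω * (Q s - Q₀)).trace ∂μ
      ≤ ∫ ω, (Real.log (1 + S ω * Q s).det - Real.log (1 + S ω * Q₀).det) ∂μ := by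
        refine integral_mono_ae (integrable_trace_inv_one_add_mul_mul hS_meas hS_psd hS_int
          (hQ s) _) (hlog.sub hlog₀) ?_
        filter_upwards [hS_psd] with ω hω
        exact trace_inv_one_add_mul_mul_sub_le hω hQ₀ (hQ s)
    _ ≤ 0 := by
        rw [integral_sub hlog hlog₀]
        linarith

end Integral

section Cholesky

lemma Matrix.BlockTriangular.trace_transpose_mul_self {n : Type*} [Fintype n] [LinearOrder n]
    {T : Matrix n n ℝ} (hT : T.BlockTriangular id) :
    (Tᵀ * T).trace = ∑ p ∈ Finset.univ.filter (fun p : n × n => p.1 ≤ p.2), T p.1 p.2 ^ 2 := by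
  rw [Finset.sum_filter_of_ne fun p _ hp => not_lt.1 fun h => hp (by simp [hT h])]
  simp only [trace, diag, mul_apply, transpose_apply, ← sq, Fintype.sum_prod_type]
  exact Finset.sum_comm

lemma choleskyFeasible_iff {t : ℕ} {T : Matrix (Fin t) (Fin t) ℝ} :
    CholeskyFeasible T ↔ T.BlockTriangular id ∧ (∀ i, 0 ≤ T i i) ∧ (Tᵀ * T).trace = 1 := by
  refine ⟨fun ⟨h₁, h₂, h₃⟩ => ⟨h₁, h₂, ?_⟩, fun ⟨h₁, h₂, h₃⟩ => ⟨h₁, h₂, ?_⟩⟩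
  · rwa [BlockTriangular.trace_transpose_mul_self h₁]
  · rwa [← BlockTriangular.trace_transpose_mul_self h₁]

variable {n : Type*} [Fintype n]

/-- The derivative of `X ↦ Xᵀ * X` at `T` in the direction `D`; `gramDeriv T (single i j 1)` is
the paper's `E^{(ij)} = ∂(TᵀT)/∂T_{ij}`. -/
def gramDeriv (T D : Matrix n n ℝ) : Matrix n n ℝ := Dᵀ * T + Tᵀ * D

lemma gramDeriv_neg (T D : Matrix n n ℝ) : gramDeriv T (-D) = -gramDeriv T D := by
  simp only [gramDeriv, transpose_neg, Matrix.neg_mul, Matrix.mul_neg, neg_add]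

lemma gramDeriv_single_apply [DecidableEq n] (T : Matrix n n ℝ) (i j m k : n) :
    gramDeriv T (single i j 1) m k
      = T i k * (if m = j then 1 else 0) + T i m * (if k = j then 1 else 0) := by
  simp [gramDeriv, mul_apply, single_apply, ite_and, mul_comm, eq_comm]

lemma trace_gramDeriv_single [DecidableEq n] (T : Matrix n n ℝ) (i j : n) :
    (gramDeriv T (single i j 1)).trace = 2 * T i j := by
  simp [trace, gramDeriv_single_apply, Finset.sum_add_distrib, two_mul]

/-- For upper-triangular `T + s • D` the trace below is the constraint sum of `CholeskyFeasible`,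
so this is the projection of `T + s • D` onto the feasible sphere. -/
noncomputable def sphereCurve (T D : Matrix n n ℝ) (s : ℝ) : Matrix n n ℝ :=
  (√((T + s • D)ᵀ * (T + s • D)).trace)⁻¹ • (T + s • D)

lemma transpose_sphereCurve_mul_self (T D : Matrix n n ℝ) (s : ℝ) :
    (sphereCurve T D s)ᵀ * sphereCurve T D s
      = (((T + s • D)ᵀ * (T + s • D)).trace)⁻¹ • ((T + s • D)ᵀ * (T + s • D)) := by
  rw [sphereCurve, transpose_smul, Matrix.smul_mul, Matrix.mul_smul, smul_smul, ← mul_inv,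
    Real.mul_self_sqrt (posSemidef_transpose_mul_self _).trace_nonneg]

lemma transpose_add_smul_mul_add_smul (T D : Matrix n n ℝ) (s : ℝ) :
    (T + s • D)ᵀ * (T + s • D) = Tᵀ * T + s • (gramDeriv T D + s • (Dᵀ * D)) := by
  simp only [gramDeriv, transpose_add, transpose_smul, Matrix.add_mul, Matrix.mul_add,
    Matrix.smul_mul, Matrix.mul_smul]
  module

lemma tendsto_slope_transpose_sphereCurve_mul_self {T : Matrix n n ℝ} (hT : (Tᵀ * T).trace = 1)
    (D : Matrix n n ℝ) :
    Tendsto (fun s => s⁻¹ • ((sphereCurve T D s)ᵀ * sphereCurve T D s - Tᵀ * T)) (𝓝[>] 0)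
      (𝓝 (gramDeriv T D - (gramDeriv T D).trace • (Tᵀ * T))) := by
  set Q := Tᵀ * T
  set B : ℝ → Matrix n n ℝ := fun s => gramDeriv T D + s • (Dᵀ * D)
  set N : ℝ → ℝ := fun s => 1 + s * (B s).trace
  have hB : Continuous B := continuous_const.add (continuous_id.smul continuous_const)
  have hN : Continuous N :=
    continuous_const.add (continuous_id.mul (continuous_id.matrix_trace.comp hB))
  have hlim : Tendsto (fun s => (N s)⁻¹ • (B s - (B s).trace • Q)) (𝓝 0)
      (𝓝 (gramDeriv T D - (gramDeriv T D).trace • Q)) := by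
    have := ((hN.tendsto 0).inv₀ (by simp [N])).smul ((hB.tendsto 0).sub
      (((continuous_id.matrix_trace.comp hB).tendsto 0).smul (tendsto_const_nhds (x := Q))))
    simpa [B, N] using this
  have hN0 : ∀ᶠ s in 𝓝 (0 : ℝ), N s ≠ 0 := (hN.tendsto 0).eventually_ne (by simp [N])
  refine (hlim.mono_left nhdsWithin_le_nhds).congr' ?_
  filter_upwards [nhdsWithin_le_nhds hN0, self_mem_nhdsWithin] with s hNs (hs : 0 < s)
  have hgram : (T + s • D)ᵀ * (T + s • D) = Q + s • B s := transpose_add_smul_mul_add_smul T D s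
  have htr : ((T + s • D)ᵀ * (T + s • D)).trace = N s := by
    rw [hgram, trace_add, trace_smul, hT, smul_eq_mul]
  rw [transpose_sphereCurve_mul_self, htr, hgram]
  symm
  calc s⁻¹ • ((N s)⁻¹ • (Q + s • B s) - Q)
      = s⁻¹ • ((N s)⁻¹ • (Q + s • B s) - (N s)⁻¹ • (N s • Q)) := by rw [inv_smul_smul₀ hNs]
    _ = s⁻¹ • ((N s)⁻¹ • (s • (B s - (B s).trace • Q))) := by
        rw [← smul_sub]
        congr 2
        module
    _ = (N s)⁻¹ • (B s - (B s).trace • Q) := by rw [smul_comm _ s, inv_smul_smul₀ hs.ne']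

variable {t : ℕ}

lemma eventually_choleskyFeasible_sphereCurve {T D : Matrix (Fin t) (Fin t) ℝ}
    (hT : CholeskyFeasible T) (hD : D.BlockTriangular id) (hDdiag : ∀ i, T i i = 0 → 0 ≤ D i i) :
    ∀ᶠ s in 𝓝[>] 0, CholeskyFeasible (sphereCurve T D s) := by
  obtain ⟨hTtri, hTdiag, hTtr⟩ := choleskyFeasible_iff.1 hT
  have hU : Continuous fun s : ℝ => T + s • D :=
    continuous_const.add (continuous_id.smul continuous_const)
  have hN : ∀ᶠ s in 𝓝[>] (0 : ℝ), 0 < ((T + s • D)ᵀ * (T + s • D)).trace := by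
    have : Tendsto (fun s : ℝ => ((T + s • D)ᵀ * (T + s • D)).trace) (𝓝 0) (𝓝 1) := by
      simpa [hTtr] using (hU.matrix_transpose.matrix_mul hU).matrix_trace.tendsto 0
    exact nhdsWithin_le_nhds (this.eventually (eventually_gt_nhds one_pos))
  have hdiag : ∀ᶠ s in 𝓝[>] (0 : ℝ), ∀ i, 0 ≤ T i i + s * D i i := by
    refine eventually_all.2 fun i => ?_
    rcases (hTdiag i).eq_or_lt with h | h
    · filter_upwards [self_mem_nhdsWithin] with s (hs : 0 < s)
      rw [← h, zero_add]
      exact mul_nonneg hs.le (hDdiag i h.symm)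
    · have := (continuous_const.add (continuous_id.mul continuous_const)).tendsto (0 : ℝ)
        (f := fun s => T i i + s * D i i)
      simp only [zero_mul, add_zero] at this
      exact nhdsWithin_le_nhds (this.eventually (eventually_ge_nhds h))
  filter_upwards [hN, hdiag] with s hs hsd
  refine choleskyFeasible_iff.2 ⟨fun i j hij => by simp [sphereCurve, hTtri hij, hD hij],
    fun i => ?_, ?_⟩
  · simpa [sphereCurve] using mul_nonneg (inv_nonneg.2 (Real.sqrt_nonneg _)) (hsd i)
  · rw [transpose_sphereCurve_mul_self, trace_smul, smul_eq_mul, inv_mul_cancel₀ hs.ne']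

variable {Ω : Type*} [MeasurableSpace Ω] {μ : Measure Ω} {S : Ω → Matrix (Fin t) (Fin t) ℝ}

lemma integral_trace_inv_one_add_mul_mul_le_of_isMaxOn (hS_meas : Measurable S)
    (hS_psd : ∀ᵐ ω ∂μ, (S ω).PosSemidef) (hS_int : ∀ i j, Integrable (fun ω => S ω i j) μ)
    {T D : Matrix (Fin t) (Fin t) ℝ} (hT : CholeskyFeasible T)
    (hmax : IsMaxOn (fun T => ∫ ω, Real.log (1 + S ω * (Tᵀ * T)).det ∂μ)
      {T | CholeskyFeasible T} T)
    (hD : D.BlockTriangular id) (hDdiag : ∀ i, T i i = 0 → 0 ≤ D i i) :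
    ∫ ω, ((1 + S ω * (Tᵀ * T))⁻¹ * S ω * gramDeriv T D).trace ∂μ
      ≤ (gramDeriv T D).trace * ∫ ω, ((1 + S ω * (Tᵀ * T))⁻¹ * S ω * (Tᵀ * T)).trace ∂μ := by
  have hQ := posSemidef_transpose_mul_self T
  have h := integral_trace_inv_one_add_mul_mul_nonpos_of_tendsto_slope hS_meas hS_psd hS_int
    (fun s => posSemidef_transpose_mul_self (sphereCurve T D s)) hQ
    (tendsto_slope_transpose_sphereCurve_mul_self (choleskyFeasible_iff.1 hT).2.2 D)
    ((eventually_choleskyFeasible_sphereCurve hT hD hDdiag).mono fun s hs => hmax hs)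
  simp_rw [Matrix.mul_sub, Matrix.mul_smul, trace_sub, trace_smul, smul_eq_mul] at h
  rwa [integral_sub (integrable_trace_inv_one_add_mul_mul hS_meas hS_psd hS_int hQ _)
    ((integrable_trace_inv_one_add_mul_mul hS_meas hS_psd hS_int hQ _).const_mul _),
    integral_const_mul, sub_nonpos] at h

lemma integral_trace_inv_one_add_mul_mul_gramDeriv_single_le (hS_meas : Measurable S)
    (hS_psd : ∀ᵐ ω ∂μ, (S ω).PosSemidef) (hS_int : ∀ i j, Integrable (fun ω => S ω i j) μ)
    {T : Matrix (Fin t) (Fin t) ℝ} (hT : CholeskyFeasible T)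
    (hmax : IsMaxOn (fun T => ∫ ω, Real.log (1 + S ω * (Tᵀ * T)).det ∂μ)
      {T | CholeskyFeasible T} T) {i j : Fin t} (hij : i ≤ j) :
    ∫ ω, ((1 + S ω * (Tᵀ * T))⁻¹ * S ω * gramDeriv T (single i j 1)).trace ∂μ
      ≤ 2 * T i j * ∫ ω, ((1 + S ω * (Tᵀ * T))⁻¹ * S ω * (Tᵀ * T)).trace ∂μ := by
  have := integral_trace_inv_one_add_mul_mul_le_of_isMaxOn hS_meas hS_psd hS_int hT hmax
    (blockTriangular_single (b := id) hij 1) fun k _ => by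
      simp only [single_apply]
      split_ifs <;> norm_num
  rwa [trace_gramDeriv_single] at this

lemma le_integral_trace_inv_one_add_mul_mul_gramDeriv_single (hS_meas : Measurable S)
    (hS_psd : ∀ᵐ ω ∂μ, (S ω).PosSemidef) (hS_int : ∀ i j, Integrable (fun ω => S ω i j) μ)
    {T : Matrix (Fin t) (Fin t) ℝ} (hT : CholeskyFeasible T)
    (hmax : IsMaxOn (fun T => ∫ ω, Real.log (1 + S ω * (Tᵀ * T)).det ∂μ)
      {T | CholeskyFeasible T} T) {i j : Fin t} (hij : i ≤ j) (hdiag : i = j → 0 < T i i) :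
    2 * T i j * ∫ ω, ((1 + S ω * (Tᵀ * T))⁻¹ * S ω * (Tᵀ * T)).trace ∂μ
      ≤ ∫ ω, ((1 + S ω * (Tᵀ * T))⁻¹ * S ω * gramDeriv T (single i j 1)).trace ∂μ := by
  have := integral_trace_inv_one_add_mul_mul_le_of_isMaxOn hS_meas hS_psd hS_int hT hmax
    (blockTriangular_single (b := id) hij 1).neg fun k hk => by
      simp only [Matrix.neg_apply, single_apply]
      split_ifs with h
      · obtain ⟨rfl, rfl⟩ := h
        exact absurd hk (hdiag rfl).ne'
      · simp
  simp only [gramDeriv_neg, Matrix.mul_neg, trace_neg, integral_neg, trace_gramDeriv_single,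
    neg_mul, neg_le_neg_iff] at this
  exact this

end Cholesky

theorem cholesky_kuhn_tucker_general
    (t : ℕ)
    {Ω : Type*} [MeasurableSpace Ω] (Pr : Measure Ω)
    (S : Ω → Matrix (Fin t) (Fin t) ℝ) (hS_meas : Measurable S)
    (hS_psd : ∀ᵐ ω ∂Pr, (S ω).PosSemidef)
    (hS_int : Integrable (fun ω => ‖S ω‖) Pr)
    (Ψ : Matrix (Fin t) (Fin t) ℝ → ℝ)
    (hΨ : ∀ T : Matrix (Fin t) (Fin t) ℝ,
      Ψ T = ∫ ω, Real.log ((1 + S ω * (Tᵀ * T)).det) ∂Pr)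
    (T : Matrix (Fin t) (Fin t) ℝ) (hT : CholeskyFeasible T)
    (E : Fin t → Fin t → Matrix (Fin t) (Fin t) ℝ)
    (hE : ∀ i j m n : Fin t,
      E i j m n = T i n * (if m = j then 1 else 0) + T i m * (if n = j then 1 else 0))
    (hmax : ∀ T' : Matrix (Fin t) (Fin t) ℝ, CholeskyFeasible T' → Ψ T' ≤ Ψ T) :
    ∃ μ : ℝ, 0 ≤ μ ∧
      (∀ i j : Fin t, i < j →
        (∫ ω, ((1 + S ω * (Tᵀ * T))⁻¹ * S ω * E i j).trace ∂Pr) = 2 * μ * T i j) ∧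
      (∀ i : Fin t, 0 < T i i →
        (∫ ω, ((1 + S ω * (Tᵀ * T))⁻¹ * S ω * E i i).trace ∂Pr) = 2 * μ * T i i) ∧
      (∀ i : Fin t, T i i = 0 →
        (∫ ω, ((1 + S ω * (Tᵀ * T))⁻¹ * S ω * E i i).trace ∂Pr) ≤ 0) := by
  obtain rfl : E = fun i j => gramDeriv T (single i j 1) :=
    funext₂ fun i j => ext fun m n => by rw [hE, gramDeriv_single_apply]
  have hS_int' := integrable_apply_of_integrable_norm hS_meas hS_int
  have hmax' : IsMaxOn (fun T => ∫ ω, Real.log (1 + S ω * (Tᵀ * T)).det ∂Pr)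
      {T | CholeskyFeasible T} T := fun T' hT' => by
    simpa only [hΨ, Set.mem_ofPred_eq] using hmax T' hT'
  have hle {i j} (hij : i ≤ j) := integral_trace_inv_one_add_mul_mul_gramDeriv_single_le
    hS_meas hS_psd hS_int' hT hmax' hij
  have hge {i j} (hij : i ≤ j) := le_integral_trace_inv_one_add_mul_mul_gramDeriv_single
    hS_meas hS_psd hS_int' hT hmax' hij
  refine ⟨∫ ω, ((1 + S ω * (Tᵀ * T))⁻¹ * S ω * (Tᵀ * T)).trace ∂Pr, ?_, fun i j hij => ?_,
    fun i hi => ?_, fun i hi => ?_⟩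
  · exact integral_nonneg_of_ae <| hS_psd.mono fun ω hω =>
      trace_inv_one_add_mul_mul_nonneg hω (posSemidef_transpose_mul_self T)
  · rw [mul_right_comm]
    exact (hle hij.le).antisymm (hge hij.le fun h => absurd h hij.ne)
  · rw [mul_right_comm]
    exact (hle le_rfl).antisymm (hge le_rfl fun _ => hi)
  · simpa [hi] using hle (le_refl i)

/-- **Kuhn–Tucker stationarity conditions for the optimal Cholesky factor.**
If `T` maximizes `Ψ(T) = E[log det (I + S TᵀT)]` over feasible Cholesky factors, then
there is `μ ≥ 0` such that `E[tr((I + S TᵀT)⁻¹ S E^{(ij)})] = 2 μ T_{ij}` for `i < j`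
and for diagonal entries with `T_{ii} > 0`, while
`E[tr((I + S TᵀT)⁻¹ S E^{(ii)})] ≤ 0` when `T_{ii} = 0`; here
`(E^{(ij)})_{mn} = T_{in} δ_{mj} + T_{im} δ_{nj}` is `∂(TᵀT)/∂T_{ij}`. -/
theorem cholesky_kuhn_tucker
    (t : ℕ) (ht : 0 < t)
    {Ω : Type*} [MeasurableSpace Ω] (Pr : Measure Ω) [IsProbabilityMeasure Pr]
    (S : Ω → Matrix (Fin t) (Fin t) ℝ) (hS_meas : Measurable S)
    (hS_psd : ∀ᵐ ω ∂Pr, (S ω).PosSemidef)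
    (hS_int : Integrable (fun ω => ‖S ω‖) Pr)
    (Ψ : Matrix (Fin t) (Fin t) ℝ → ℝ)
    (hΨ : ∀ T : Matrix (Fin t) (Fin t) ℝ,
      Ψ T = ∫ ω, Real.log ((1 + S ω * (Tᵀ * T)).det) ∂Pr)
    (T : Matrix (Fin t) (Fin t) ℝ) (hT : CholeskyFeasible T)
    (E : Fin t → Fin t → Matrix (Fin t) (Fin t) ℝ)
    (hE : ∀ i j m n : Fin t,
      E i j m n = T i n * (if m = j then 1 else 0) + T i m * (if n = j then 1 else 0))
    (hmax : ∀ T' : Matrix (Fin t) (Fin t) ℝ, CholeskyFeasible T' → Ψ T' ≤ Ψ T) :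
    ∃ μ : ℝ, 0 ≤ μ ∧
      (∀ i j : Fin t, i < j →
        (∫ ω, ((1 + S ω * (Tᵀ * T))⁻¹ * S ω * E i j).trace ∂Pr) = 2 * μ * T i j) ∧
      (∀ i : Fin t, 0 < T i i →
        (∫ ω, ((1 + S ω * (Tᵀ * T))⁻¹ * S ω * E i i).trace ∂Pr) = 2 * μ * T i i) ∧
      (∀ i : Fin t, T i i = 0 →
        (∫ ω, ((1 + S ω * (Tᵀ * T))⁻¹ * S ω * E i i).trace ∂Pr) ≤ 0) :=
  cholesky_kuhn_tucker_general t Pr S hS_meas hS_psd hS_int Ψ hΨ T hT E hE hmax
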